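/- arXiv:2209.04832 — 2 statements merged into one kernel-verified Lean document; each statement's English description precedes it below -/
import Mathlib

section
/- For each β ∈ (0,1) there exists a constant c(β) such that for all x ∈ ℝ and 0 ≤ τ < t₂ < t₁, ∫_ℝ |G(x,t₁;s,τ) − G(x,t₂;s,τ)| ds ≤ c(β) · ((t₁−t₂)/(t₂−τ))^{β/2}. -/
/-!
With `dᵢ = tᵢ - τ`, the kernels `G(x,tᵢ;·,τ)` are Gaussian probability densities, and the wider
one dominates `√(d₂/d₁)` times the narrower one (smaller normalising factor, larger exponential).
Two probability densities with `a g ≤ f` are at `L¹` distance at most `2 (1 - a)`, and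
`1 - √(d₂/d₁) ≤ min 1 ((d₁ - d₂)/d₂) ≤ ((t₁ - t₂)/(t₂ - τ))^(β/2)`, giving the bound with `c = 2`.
-/

open MeasureTheory Real

noncomputable def G (x t s τ : ℝ) : ℝ :=
  (1 / Real.sqrt (4 * Real.pi * (t - τ))) * Real.exp (-(x - s)^2 / (4 * (t - τ)))

/-- `f - g = (f - a g) - (1 - a) g` splits into two nonnegative parts of mass `1 - a` each. -/
lemma integral_abs_sub_le_of_mul_le {α : Type*} [MeasurableSpace α] {μ : Measure α}
    {f g : α → ℝ} {a : ℝ} (hf : Integrable f μ) (hg : Integrable g μ)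
    (hf_one : ∫ y, f y ∂μ = 1) (hg_one : ∫ y, g y ∂μ = 1) (hg_nonneg : ∀ y, 0 ≤ g y)
    (ha : a ≤ 1) (hag : ∀ y, a * g y ≤ f y) :
    ∫ y, |f y - g y| ∂μ ≤ 2 * (1 - a) := by
  have hpt : ∀ y, |f y - g y| ≤ (f y - a * g y) + (1 - a) * g y := fun y => by
    have := hag y
    have := mul_nonneg (sub_nonneg.mpr ha) (hg_nonneg y)
    rw [abs_le]
    constructor <;> linarith
  have hcommon : Integrable (fun y => f y - a * g y) μ := hf.sub (hg.const_mul a)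
  have hexcess : Integrable (fun y => (1 - a) * g y) μ := hg.const_mul _
  calc ∫ y, |f y - g y| ∂μ ≤ ∫ y, ((f y - a * g y) + (1 - a) * g y) ∂μ :=
        integral_mono (hf.sub hg).abs (hcommon.add hexcess) hpt
    _ = 2 * (1 - a) := by
        rw [integral_add hcommon hexcess, integral_sub hf (hg.const_mul a), integral_const_mul,
          integral_const_mul, hf_one, hg_one]
        ring

lemma G_eq_gaussianPDFReal (x t τ s : ℝ) (h : τ < t) :
    G x t s τ = ProbabilityTheory.gaussianPDFReal x (2 * (t - τ)).toNNReal s := by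
  have hd : 0 ≤ 2 * (t - τ) := by linarith
  rw [ProbabilityTheory.gaussianPDFReal, Real.coe_toNNReal _ hd, G, one_div]
  ring_nf

lemma G_nonneg (x t s τ : ℝ) : 0 ≤ G x t s τ := by
  unfold G
  positivity

lemma integrable_G (x t τ : ℝ) (h : τ < t) : Integrable (fun s => G x t s τ) := by
  simp only [G_eq_gaussianPDFReal x t τ _ h]
  exact ProbabilityTheory.integrable_gaussianPDFReal _ _

lemma integral_G (x t τ : ℝ) (h : τ < t) : ∫ s, G x t s τ = 1 := by
  simp only [G_eq_gaussianPDFReal x t τ _ h]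
  exact ProbabilityTheory.integral_gaussianPDFReal_eq_one _ (by simpa using h)

lemma sqrt_div_mul_G_le (x s τ : ℝ) {t₁ t₂ : ℝ} (h₂ : τ < t₂) (h₁₂ : t₂ ≤ t₁) :
    √((t₂ - τ) / (t₁ - τ)) * G x t₂ s τ ≤ G x t₁ s τ := by
  have hd₂ : 0 < t₂ - τ := sub_pos.mpr h₂
  have hd₁ : 0 < t₁ - τ := by linarith
  have hconst : √((t₂ - τ) / (t₁ - τ)) * (1 / √(4 * π * (t₂ - τ))) = 1 / √(4 * π * (t₁ - τ)) := by
    rw [sqrt_div hd₂.le, sqrt_mul (by positivity) (t₂ - τ), sqrt_mul (by positivity) (t₁ - τ)]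
    have := sqrt_pos.mpr hd₂
    have := sqrt_pos.mpr (show 0 < 4 * π by positivity)
    field_simp
  have hexp : exp (-(x - s) ^ 2 / (4 * (t₂ - τ))) ≤ exp (-(x - s) ^ 2 / (4 * (t₁ - τ))) := by
    rw [neg_div, neg_div, exp_le_exp, neg_le_neg_iff]
    gcongr
  calc √((t₂ - τ) / (t₁ - τ)) * G x t₂ s τ
      = 1 / √(4 * π * (t₁ - τ)) * exp (-(x - s) ^ 2 / (4 * (t₂ - τ))) := by
        rw [G, ← mul_assoc, hconst]
    _ ≤ G x t₁ s τ := by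
        unfold G
        gcongr

lemma integral_abs_G_sub_G_le (x τ : ℝ) {t₁ t₂ : ℝ} (h₂ : τ < t₂) (h₁₂ : t₂ ≤ t₁) :
    ∫ s, |G x t₁ s τ - G x t₂ s τ| ≤ 2 * (1 - √((t₂ - τ) / (t₁ - τ))) :=
  integral_abs_sub_le_of_mul_le (integrable_G x t₁ τ (h₂.trans_le h₁₂)) (integrable_G x t₂ τ h₂)
    (integral_G x t₁ τ (h₂.trans_le h₁₂)) (integral_G x t₂ τ h₂) (fun s => G_nonneg x t₂ s τ)
    (sqrt_le_one.mpr (div_le_one_of_le₀ (by linarith) (by linarith)))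
    (fun s => sqrt_div_mul_G_le x s τ h₂ h₁₂)

lemma one_sub_sqrt_div_le_min {a b : ℝ} (hb : 0 < b) (hba : b ≤ a) :
    1 - √(b / a) ≤ min 1 ((a - b) / b) := by
  have ha : 0 < a := hb.trans_le hba
  have hq_le_sqrt : b / a ≤ √(b / a) := le_sqrt_self_iff.mpr (div_le_one_of_le₀ hba ha.le)
  refine le_min (by linarith [sqrt_nonneg (b / a)]) ?_
  calc 1 - √(b / a) ≤ 1 - b / a := by linarith
    _ = (a - b) / a := by field_simp
    _ ≤ (a - b) / b := div_le_div_of_nonneg_left (by linarith) hb hba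

lemma min_one_le_rpow {r p : ℝ} (hr : 0 ≤ r) (hp₀ : 0 ≤ p) (hp₁ : p ≤ 1) : min 1 r ≤ r ^ p := by
  rcases le_total r 1 with hr₁ | hr₁
  · exact (min_le_right _ _).trans (self_le_rpow_of_le_one hr hr₁ hp₁)
  · exact (min_le_left _ _).trans (one_le_rpow hr₁ hp₀)

theorem heat_kernel_holder_in_t (β : ℝ) (hβ : β ∈ Set.Ioo (0:ℝ) 1) :
    ∃ c : ℝ, 0 < c ∧ ∀ (x t₁ t₂ τ : ℝ), 0 ≤ τ → τ < t₂ → t₂ < t₁ →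
      ∫ s : ℝ, |G x t₁ s τ - G x t₂ s τ| ≤
        c * ((t₁ - t₂) / (t₂ - τ)) ^ (β / 2) := by
  refine ⟨2, two_pos, fun x t₁ t₂ τ _ h₂ h₁₂ => ?_⟩
  have hd₂ : 0 < t₂ - τ := sub_pos.mpr h₂
  calc ∫ s, |G x t₁ s τ - G x t₂ s τ| ≤ 2 * (1 - √((t₂ - τ) / (t₁ - τ))) :=
        integral_abs_G_sub_G_le x τ h₂ h₁₂.le
    _ ≤ 2 * min 1 ((t₁ - t₂) / (t₂ - τ)) := by
        rw [← sub_sub_sub_cancel_right t₁ t₂ τ]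
        gcongr
        exact one_sub_sqrt_div_le_min hd₂ (sub_le_sub_right h₁₂.le τ)
    _ ≤ 2 * ((t₁ - t₂) / (t₂ - τ)) ^ (β / 2) := by
        gcongr
        exact min_one_le_rpow (div_nonneg (by linarith) hd₂.le) (by linarith [hβ.1])
          (by linarith [hβ.2])
end

section
/- Gronwall inequality with square-root singular kernel: let v : [0,T] → [0,∞) be continuous and bounded, and suppose v(t) ≤ A + C ∫₀^t (t−τ)^{−1/2} v(τ) dτ for all t ∈ [0,T], where A, C ≥ 0. Then v(t) ≤ A · E(t) where E(t) = Σ_{n=0}^∞ (C Γ(1/2))^n t^{n/2} / Γ(n/2 + 1), and in particular v(t) ≤ A · c(C,T) for a finite constant c(C,T). -/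
/-!
Picard iteration. The Beta integral shows that the Abel operator
`f ↦ ∫₀ᵗ (t - τ)^(-1/2) f(τ) dτ` maps `τ^(k/2) / Γ(k/2 + 1)` to `Γ(1/2) t^((k+1)/2) / Γ((k+1)/2 + 1)`,
so plugging the inequality into itself `n` times gives
`v ≤ A (φ₀ + ⋯ + φₙ₋₁) + M φₙ`, where `φₖ` are the terms of the series and `M` bounds the continuous
function `v` on `[0, T]`. The series converges (its even part is `exp (C² Γ(1/2)² t)`, and
its odd terms are dominated by the even ones), so `φₙ → 0` and the bound passes to the limit.
-/

open MeasureTheory Real Set Filter Finset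
open scoped Nat

theorem Complex.betaIntegral_ofReal {u w : ℝ} (hu : 0 < u) (hw : 0 < w) :
    betaIntegral u w = ↑(Real.Gamma u * Real.Gamma w / Real.Gamma (u + w)) := by
  have hΓ : Gamma ↑(u + w) ≠ 0 := by
    rw [Gamma_ofReal]; exact_mod_cast (Gamma_pos_of_pos (add_pos hu hw)).ne'
  rw [ofReal_div, ofReal_mul, ← Gamma_ofReal, ← Gamma_ofReal, ← Gamma_ofReal,
    ofReal_add, Gamma_mul_Gamma_eq_betaIntegral (by simpa) (by simpa),
    mul_div_cancel_left₀ _ (by rwa [← ofReal_add])]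

theorem integral_Ioo_rpow_mul_sub_rpow {t u w : ℝ} (ht : 0 < t) (hu : 0 < u) (hw : 0 < w) :
    ∫ τ in Ioo 0 t, τ ^ (u - 1) * (t - τ) ^ (w - 1) =
      Gamma u * Gamma w / Gamma (u + w) * t ^ (u + w - 1) := by
  have hcast : ∫ x in (0:ℝ)..t, (x : ℂ) ^ ((u : ℂ) - 1) * ((t : ℂ) - x) ^ ((w : ℂ) - 1) =
      ((∫ x in (0:ℝ)..t, x ^ (u - 1) * (t - x) ^ (w - 1) : ℝ) : ℂ) := by
    rw [← intervalIntegral.integral_ofReal]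
    refine intervalIntegral.integral_congr fun x hx => ?_
    rw [uIcc_of_le ht.le] at hx
    push_cast [Complex.ofReal_cpow hx.1, Complex.ofReal_cpow (sub_nonneg.2 hx.2)]
    rfl
  have key := Complex.betaIntegral_scaled u w ht
  rw [Complex.betaIntegral_ofReal hu hw, hcast,
    show (u + w - 1 : ℂ) = ((u + w - 1 : ℝ) : ℂ) by push_cast; rfl,
    ← Complex.ofReal_cpow ht.le, ← Complex.ofReal_mul, Complex.ofReal_inj,
    intervalIntegral.integral_of_le ht.le, integral_Ioc_eq_integral_Ioo] at key
  rw [key, mul_comm]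

noncomputable def abelIntegral (f : ℝ → ℝ) (t : ℝ) : ℝ :=
  ∫ τ in Ioo 0 t, (t - τ) ^ (-(1/2 : ℝ)) * f τ

section AbelIntegral

variable {f g : ℝ → ℝ} {t : ℝ}

theorem integrableOn_abelKernel (ht : 0 ≤ t) :
    IntegrableOn (fun τ => (t - τ) ^ (-(1/2 : ℝ))) (Ioo 0 t) := by
  have h := (intervalIntegral.intervalIntegrable_rpow' (a := 0) (b := t)
    (r := -(1/2 : ℝ)) (by norm_num)).comp_sub_left t |>.symm
  rw [sub_self, sub_zero, intervalIntegrable_iff_integrableOn_Ioc_of_le ht] at h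
  exact h.mono_set Ioo_subset_Ioc_self

theorem integrableOn_abelKernel_mul (ht : 0 ≤ t) (hf : ContinuousOn f (Icc 0 t)) :
    IntegrableOn (fun τ => (t - τ) ^ (-(1/2 : ℝ)) * f τ) (Ioo 0 t) :=
  (integrableOn_abelKernel ht).mul_continuousOn_of_subset hf measurableSet_Ioo isCompact_Icc
    Ioo_subset_Icc_self

theorem abelIntegral_mono (ht : 0 ≤ t) (hf : ContinuousOn f (Icc 0 t))
    (hg : ContinuousOn g (Icc 0 t)) (hfg : ∀ τ ∈ Ioo 0 t, f τ ≤ g τ) :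
    abelIntegral f t ≤ abelIntegral g t :=
  setIntegral_mono_on (integrableOn_abelKernel_mul ht hf) (integrableOn_abelKernel_mul ht hg)
    measurableSet_Ioo fun τ hτ =>
      mul_le_mul_of_nonneg_left (hfg τ hτ) (rpow_nonneg (sub_nonneg.2 hτ.2.le) _)

theorem abelIntegral_add (ht : 0 ≤ t) (hf : ContinuousOn f (Icc 0 t))
    (hg : ContinuousOn g (Icc 0 t)) :
    abelIntegral (fun τ => f τ + g τ) t = abelIntegral f t + abelIntegral g t := by
  simp only [abelIntegral, mul_add]
  exact integral_add (integrableOn_abelKernel_mul ht hf) (integrableOn_abelKernel_mul ht hg)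

theorem abelIntegral_const_mul (c : ℝ) (f : ℝ → ℝ) (t : ℝ) :
    abelIntegral (fun τ => c * f τ) t = c * abelIntegral f t := by
  simp only [abelIntegral, mul_left_comm _ c, integral_const_mul]

theorem abelIntegral_finset_sum {ι : Type*} (s : Finset ι) {f : ι → ℝ → ℝ} (ht : 0 ≤ t)
    (hf : ∀ i ∈ s, ContinuousOn (f i) (Icc 0 t)) :
    abelIntegral (fun τ => ∑ i ∈ s, f i τ) t = ∑ i ∈ s, abelIntegral (f i) t := by
  simp only [abelIntegral, Finset.mul_sum]
  exact integral_finsetSum s fun i hi => integrableOn_abelKernel_mul ht (hf i hi)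

theorem abelIntegral_zero_right (f : ℝ → ℝ) : abelIntegral f 0 = 0 := by
  simp [abelIntegral]

theorem abelIntegral_rpow (ht : 0 < t) {p : ℝ} (hp : -1 < p) :
    abelIntegral (fun τ => τ ^ p) t =
      Gamma (p + 1) * Gamma (1/2) / Gamma (p + 3/2) * t ^ (p + 1/2) := by
  have h := integral_Ioo_rpow_mul_sub_rpow ht (by linarith : 0 < p + 1) one_half_pos
  rw [show p + 1 - 1 = p by ring, show (1/2 : ℝ) - 1 = -(1/2) by norm_num,
    show p + 1 + 1/2 = p + 3/2 by ring, show p + 3/2 - 1 = p + 1/2 by ring] at h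
  rw [abelIntegral, ← h]
  exact setIntegral_congr_fun measurableSet_Ioo fun τ _ => mul_comm _ _

end AbelIntegral

/-- Summed over `n`, these are the terms of the Mittag-Leffler function
`E_{1/2}(C Γ(1/2) √t) = ∑ (C Γ(1/2) √t)ⁿ / Γ(n/2 + 1)`. -/
noncomputable def gronwallTerm (C : ℝ) (n : ℕ) (t : ℝ) : ℝ :=
  (C * Gamma (1/2)) ^ n * t ^ ((n : ℝ) / 2) / Gamma ((n : ℝ) / 2 + 1)

theorem Real.factorial_le_two_mul_Gamma_add_three_halves (m : ℕ) :
    (m ! : ℝ) ≤ 2 * Gamma (m + 3/2) := by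
  induction m with
  | zero =>
    rw [show ((0 : ℕ) : ℝ) + 3/2 = 1/2 + 1 by norm_num, Gamma_add_one one_half_pos.ne',
      Gamma_one_half_eq, Nat.factorial_zero, Nat.cast_one]
    nlinarith [one_le_sqrt.2 (by linarith [pi_gt_three] : (1 : ℝ) ≤ π)]
  | succ m ih =>
    rw [Nat.factorial_succ, Nat.cast_mul, Nat.cast_succ,
      show (m : ℝ) + 1 + 3/2 = (m + 3/2) + 1 by ring,
      Gamma_add_one (by positivity)]
    nlinarith [(by positivity : 0 < Gamma (m + 3/2))]

section GronwallTerm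

variable {C : ℝ}

theorem gronwallTerm_zero (C t : ℝ) : gronwallTerm C 0 t = 1 := by
  simp [gronwallTerm]

theorem gronwallTerm_nonneg (hC : 0 ≤ C) (n : ℕ) {t : ℝ} (ht : 0 ≤ t) :
    0 ≤ gronwallTerm C n t := by
  unfold gronwallTerm
  positivity

theorem gronwallTerm_mono (hC : 0 ≤ C) (n : ℕ) {s t : ℝ} (hs : 0 ≤ s) (hst : s ≤ t) :
    gronwallTerm C n s ≤ gronwallTerm C n t := by
  unfold gronwallTerm
  gcongr

theorem continuous_gronwallTerm (C : ℝ) (n : ℕ) : Continuous (gronwallTerm C n) :=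
  (continuous_const.mul (continuous_rpow_const (q := (n : ℝ) / 2) (by positivity))).div_const _

theorem mul_abelIntegral_gronwallTerm (k : ℕ) {t : ℝ} (ht : 0 ≤ t) :
    C * abelIntegral (gronwallTerm C k) t = gronwallTerm C (k + 1) t := by
  rcases ht.eq_or_lt with rfl | ht
  · rw [abelIntegral_zero_right, gronwallTerm, zero_rpow (by positivity)]
    simp
  have hk : gronwallTerm C k = fun τ =>
      (C * Gamma (1/2)) ^ k / Gamma ((k : ℝ) / 2 + 1) * τ ^ ((k : ℝ) / 2) := by
    ext τ; rw [gronwallTerm, mul_div_right_comm]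
  rw [hk, abelIntegral_const_mul, abelIntegral_rpow ht (neg_one_lt_zero.trans_le (by positivity)),
    gronwallTerm,
    show ((k + 1 : ℕ) : ℝ) / 2 = k / 2 + 1/2 by push_cast; ring,
    show (k : ℝ) / 2 + 1/2 + 1 = k / 2 + 3/2 by ring]
  field_simp
  ring

theorem mul_abelIntegral_sum_gronwallTerm (n : ℕ) {t : ℝ} (ht : 0 ≤ t) :
    C * abelIntegral (fun τ => ∑ k ∈ range n, gronwallTerm C k τ) t =
      ∑ k ∈ range (n + 1), gronwallTerm C k t - 1 := by
  rw [abelIntegral_finset_sum _ ht fun k _ => (continuous_gronwallTerm C k).continuousOn,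
    Finset.mul_sum, sum_range_succ', gronwallTerm_zero]
  simp only [mul_abelIntegral_gronwallTerm _ ht, add_sub_cancel_right]

theorem gronwallTerm_two_mul (C : ℝ) (m : ℕ) (t : ℝ) :
    gronwallTerm C (2 * m) t = ((C * Gamma (1/2)) ^ 2 * t) ^ m / m ! := by
  rw [gronwallTerm, show ((2 * m : ℕ) : ℝ) / 2 = m by push_cast; ring, Gamma_nat_eq_factorial,
    rpow_natCast, pow_mul, ← mul_pow]

theorem gronwallTerm_two_mul_add_one_le (hC : 0 ≤ C) (m : ℕ) {t : ℝ} (ht : 0 ≤ t) :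
    gronwallTerm C (2 * m + 1) t ≤
      2 * (C * Gamma (1/2)) * t ^ (1/2 : ℝ) * gronwallTerm C (2 * m) t := by
  have hfact := factorial_le_two_mul_Gamma_add_three_halves m
  set X := (C * Gamma (1/2)) ^ (2 * m + 1) * (t ^ m * t ^ (1/2 : ℝ))
  have hX : 0 ≤ X := by positivity
  calc gronwallTerm C (2 * m + 1) t = X / Gamma (m + 3/2) := by
        rw [gronwallTerm, show ((2 * m + 1 : ℕ) : ℝ) / 2 = m + 1/2 by push_cast; ring,
          rpow_add' ht (by positivity), rpow_natCast, show (m : ℝ) + 1/2 + 1 = m + 3/2 by ring]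
    _ ≤ X / (m ! / 2) := div_le_div_of_nonneg_left hX (by positivity) (by linarith)
    _ = 2 * (C * Gamma (1/2)) * t ^ (1/2 : ℝ) * gronwallTerm C (2 * m) t := by
        rw [gronwallTerm_two_mul]; ring

theorem summable_gronwallTerm (hC : 0 ≤ C) {t : ℝ} (ht : 0 ≤ t) :
    Summable fun n => gronwallTerm C n t := by
  have heven : Summable fun m => gronwallTerm C (2 * m) t := by
    simpa only [gronwallTerm_two_mul] using summable_pow_div_factorial _
  exact heven.even_add_odd <| (heven.mul_left _).of_nonneg_of_le
    (fun m => gronwallTerm_nonneg hC _ ht) fun m => gronwallTerm_two_mul_add_one_le hC m ht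

theorem one_le_tsum_gronwallTerm (hC : 0 ≤ C) {t : ℝ} (ht : 0 ≤ t) :
    1 ≤ ∑' n, gronwallTerm C n t := by
  simpa [gronwallTerm_zero] using (summable_gronwallTerm hC ht).le_tsum 0
    fun n _ => gronwallTerm_nonneg hC n ht

theorem tsum_gronwallTerm_mono (hC : 0 ≤ C) {s t : ℝ} (hs : 0 ≤ s) (hst : s ≤ t) :
    ∑' n, gronwallTerm C n s ≤ ∑' n, gronwallTerm C n t :=
  (summable_gronwallTerm hC hs).tsum_le_tsum (fun n => gronwallTerm_mono hC n hs hst)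
    (summable_gronwallTerm hC (hs.trans hst))

end GronwallTerm

section Iteration

variable {T A C M : ℝ} {v : ℝ → ℝ}

theorem le_sum_gronwallTerm_add (hC : 0 ≤ C) (hv : ContinuousOn v (Icc 0 T))
    (hineq : ∀ t ∈ Icc 0 T, v t ≤ A + C * abelIntegral v t)
    (hM : ∀ t ∈ Icc 0 T, v t ≤ M) (n : ℕ) :
    ∀ t ∈ Icc 0 T, v t ≤ A * ∑ k ∈ range n, gronwallTerm C k t + M * gronwallTerm C n t := by
  induction n with
  | zero => simpa [gronwallTerm_zero] using hM
  | succ n ih =>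
    intro t ht
    have hsub : Icc 0 t ⊆ Icc 0 T := Icc_subset_Icc_right ht.2
    have hS : Continuous fun τ => ∑ k ∈ range n, gronwallTerm C k τ :=
      continuous_finsetSum _ fun k _ => continuous_gronwallTerm C k
    have hw : Continuous fun τ =>
        A * ∑ k ∈ range n, gronwallTerm C k τ + M * gronwallTerm C n τ :=
      (continuous_const.mul hS).add (continuous_const.mul (continuous_gronwallTerm C n))
    calc v t ≤ A + C * abelIntegral v t := hineq t ht
      _ ≤ A + C * abelIntegral
            (fun τ => A * ∑ k ∈ range n, gronwallTerm C k τ + M * gronwallTerm C n τ) t := by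
          gcongr
          exact abelIntegral_mono ht.1 (hv.mono hsub) hw.continuousOn
            fun τ hτ => ih τ (hsub (Ioo_subset_Icc_self hτ))
      _ = A + A * (C * abelIntegral (fun τ => ∑ k ∈ range n, gronwallTerm C k τ) t)
            + M * (C * abelIntegral (gronwallTerm C n) t) := by
          rw [abelIntegral_add ht.1 (by exact (continuous_const.mul hS).continuousOn)
            (by exact (continuous_const.mul (continuous_gronwallTerm C n)).continuousOn),
            abelIntegral_const_mul, abelIntegral_const_mul]
          ring
      _ = A * ∑ k ∈ range (n + 1), gronwallTerm C k t + M * gronwallTerm C (n + 1) t := by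
          rw [mul_abelIntegral_sum_gronwallTerm n ht.1, mul_abelIntegral_gronwallTerm n ht.1]
          ring

theorem le_mul_tsum_gronwallTerm (hC : 0 ≤ C) (hv : ContinuousOn v (Icc 0 T))
    (hineq : ∀ t ∈ Icc 0 T, v t ≤ A + C * abelIntegral v t) :
    ∀ t ∈ Icc 0 T, v t ≤ A * ∑' n, gronwallTerm C n t := by
  obtain ⟨M, hM⟩ := isCompact_Icc.bddAbove_image hv
  intro t ht
  have hsum := summable_gronwallTerm hC ht.1
  have hlim : Tendsto (fun n => A * ∑ k ∈ range n, gronwallTerm C k t + M * gronwallTerm C n t)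
      atTop (nhds (A * ∑' n, gronwallTerm C n t + M * 0)) :=
    (hsum.hasSum.tendsto_sum_nat.const_mul A).add (hsum.tendsto_atTop_zero.const_mul M)
  simpa using ge_of_tendsto' hlim fun n =>
    le_sum_gronwallTerm_add hC hv hineq (fun s hs => hM (mem_image_of_mem v hs)) n t ht

end Iteration

theorem singular_gronwall_general
    (T : ℝ) (hT : 0 < T)
    (v : ℝ → ℝ)
    (hvcont : ContinuousOn v (Set.Icc 0 T))
    (A C : ℝ) (hA : 0 ≤ A) (hC : 0 ≤ C)
    (hineq : ∀ t ∈ Set.Icc (0:ℝ) T,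
      v t ≤ A + C * ∫ τ in Set.Ioo 0 t, (t - τ) ^ (-(1/2 : ℝ)) * v τ) :
    (∀ t ∈ Set.Icc (0:ℝ) T,
      v t ≤ A * ∑' n : ℕ, (C * Real.Gamma (1/2)) ^ n * t ^ ((n : ℝ) / 2) /
        Real.Gamma ((n : ℝ) / 2 + 1)) ∧
    ∃ c : ℝ, 0 < c ∧ ∀ t ∈ Set.Icc (0:ℝ) T, v t ≤ A * c := by
  have hv := le_mul_tsum_gronwallTerm hC hvcont hineq
  refine ⟨hv, ∑' n, gronwallTerm C n T, one_pos.trans_le (one_le_tsum_gronwallTerm hC hT.le),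
    fun t ht => ?_⟩
  exact (hv t ht).trans (mul_le_mul_of_nonneg_left (tsum_gronwallTerm_mono hC ht.1 ht.2) hA)

theorem singular_gronwall
    (T : ℝ) (hT : 0 < T)
    (v : ℝ → ℝ)
    (hvcont : ContinuousOn v (Set.Icc 0 T))
    (hvnonneg : ∀ t ∈ Set.Icc (0:ℝ) T, 0 ≤ v t)
    (hvbdd : ∃ M : ℝ, ∀ t ∈ Set.Icc (0:ℝ) T, v t ≤ M)
    (A C : ℝ) (hA : 0 ≤ A) (hC : 0 ≤ C)
    (hineq : ∀ t ∈ Set.Icc (0:ℝ) T,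
      v t ≤ A + C * ∫ τ in Set.Ioo 0 t, (t - τ) ^ (-(1/2 : ℝ)) * v τ) :
    (∀ t ∈ Set.Icc (0:ℝ) T,
      v t ≤ A * ∑' n : ℕ, (C * Real.Gamma (1/2)) ^ n * t ^ ((n : ℝ) / 2) /
        Real.Gamma ((n : ℝ) / 2 + 1)) ∧
    ∃ c : ℝ, 0 < c ∧ ∀ t ∈ Set.Icc (0:ℝ) T, v t ≤ A * c :=
  singular_gronwall_general T hT v hvcont A C hA hC hineq
end
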